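/- For an admissible path γ = (α,β) in a metric warped product with m := inf_{t} f(α(t)), the warped length satisfies L(γ) ≥ m · L^F(β). In particular, if p = q, f(p) > 0 and x ≠ y, any admissible path from (p,x) to (q,y) has length bounded below by a positive constant (depending on a neighborhood of p), so d_{B×_f F}((p,x),(p,y)) > 0. -/

import Mathlib

/-!
On a stretch of the path where `f ∘ α ≥ m`, every term of a warped sum dominates both the base
step `d_B(α(tᵢ₋₁), α(tᵢ))` and `m · d_F(β(tᵢ₋₁), β(tᵢ))`; padding a partition of the fibre
variation by the endpoints gives `L(γ) ≥ m · L^F(β)`. For positivity of the distance, choose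
`δ` with `f > f(p)/2` on the `δ`-ball about `p`: a path from `(p,x)` to `(p,y)` either has its
base component leave that ball, which already costs `δ`, or has weight at least `f(p)/2` on a
fibre component of length at least `d(x,y)`.
-/

/-- The warped sum of an admissible path `γ = (α, β)` over a partition `t`:
`Σᵢ (d_B(α(tᵢ₋₁),α(tᵢ))² + f(α(tᵢ))² d_F(β(tᵢ₋₁),β(tᵢ))²)^{1/2}`. -/
noncomputable def wSum {B F : Type*} [PseudoMetricSpace B] [PseudoMetricSpace F]
    (f : B → ℝ) (γ : ℝ → B × F) {n : ℕ} (t : Fin (n + 1) → ℝ) : ENNReal :=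
  ∑ i : Fin n, ENNReal.ofReal
    (Real.sqrt (dist (γ (t i.castSucc)).1 (γ (t i.succ)).1 ^ 2 +
      f (γ (t i.succ)).1 ^ 2 * dist (γ (t i.castSucc)).2 (γ (t i.succ)).2 ^ 2))

/-- The warped length of a path `γ` over `[a,b]`: the supremum of the warped sums
over all partitions `a = t₀ ≤ t₁ ≤ … ≤ t_N = b`. -/
noncomputable def wLength {B F : Type*} [PseudoMetricSpace B] [PseudoMetricSpace F]
    (f : B → ℝ) (γ : ℝ → B × F) (a b : ℝ) : ENNReal :=
  ⨆ (n : ℕ) (t : Fin (n + 1) → ℝ) (_ : Monotone t) (_ : t 0 = a)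
    (_ : t (Fin.last n) = b), wSum f γ t

/-- A path in `B × F` is admissible on `[a,b]` if it is continuous and both of its
components are rectifiable. -/
def Admissible {B F : Type*} [PseudoMetricSpace B] [PseudoMetricSpace F]
    (γ : ℝ → B × F) (a b : ℝ) : Prop :=
  ContinuousOn γ (Set.Icc a b) ∧
    eVariationOn (fun t => (γ t).1) (Set.Icc a b) < ⊤ ∧
    eVariationOn (fun t => (γ t).2) (Set.Icc a b) < ⊤

/-- The warped product (pseudo-)distance on `B × F`: the infimum of warped lengths of
admissible paths joining the two points. -/
noncomputable def wDist {B F : Type*} [PseudoMetricSpace B] [PseudoMetricSpace F]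
    (f : B → ℝ) (x y : B × F) : ENNReal :=
  ⨅ (γ : ℝ → B × F) (_ : Admissible γ 0 1) (_ : γ 0 = x) (_ : γ 1 = y),
    wLength f γ 0 1

/-- A metric space is strictly intrinsic (geodesic) if every pair of points is joined
by a minimizing geodesic, parametrized affinely on `[0,1]`. -/
def GeodesicMS (F : Type*) [PseudoMetricSpace F] : Prop :=
  ∀ x y : F, ∃ c : ℝ → F, c 0 = x ∧ c 1 = y ∧
    ∀ s t : ℝ, dist (c s) (c t) = |s - t| * dist x y

open Set Finset

def framedSeq {α : Type*} (a b : α) (u : ℕ → α) (n : ℕ) : ℕ → α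
  | 0 => a
  | k + 1 => if k ≤ n then u k else b

lemma monotone_framedSeq {α : Type*} [Preorder α] {a b : α} {u : ℕ → α} (hu : Monotone u)
    (hau : a ≤ u 0) (hub : ∀ k, u k ≤ b) (n : ℕ) : Monotone (framedSeq a b u n) := by
  refine monotone_nat_of_le_succ fun k => ?_
  cases k with
  | zero => simpa [framedSeq] using hau
  | succ k =>
    simp only [framedSeq]
    split_ifs <;> first | exact hu k.le_succ | exact hub k | exact le_rfl | omega

section WarpedPath

variable {B F : Type*} [PseudoMetricSpace B] [PseudoMetricSpace F] (f : B → ℝ) (γ : ℝ → B × F)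

noncomputable def wTerm (s t : ℝ) : ENNReal :=
  ENNReal.ofReal (√(dist (γ s).1 (γ t).1 ^ 2 + f (γ t).1 ^ 2 * dist (γ s).2 (γ t).2 ^ 2))

lemma wSum_eq_sum_wTerm {n : ℕ} (t : Fin (n + 1) → ℝ) :
    wSum f γ t = ∑ i : Fin n, wTerm f γ (t i.castSucc) (t i.succ) :=
  rfl

lemma edist_fst_le_wTerm (s t : ℝ) : edist (γ s).1 (γ t).1 ≤ wTerm f γ s t := by
  rw [edist_dist, wTerm]
  refine ENNReal.ofReal_le_ofReal ?_
  exact Real.le_sqrt_of_sq_le (le_add_of_nonneg_right (by positivity))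

lemma ofReal_mul_edist_snd_le_wTerm {m s t : ℝ} (hm : m ≤ f (γ t).1) :
    ENNReal.ofReal m * edist (γ s).2 (γ t).2 ≤ wTerm f γ s t := by
  rcases le_or_gt m 0 with hm0 | hm0
  · simp [ENNReal.ofReal_of_nonpos hm0]
  rw [edist_dist, ← ENNReal.ofReal_mul hm0.le, wTerm]
  refine ENNReal.ofReal_le_ofReal (Real.le_sqrt_of_sq_le ?_)
  have hsq : m ^ 2 ≤ f (γ t).1 ^ 2 := pow_le_pow_left₀ hm0.le hm 2
  nlinarith [sq_nonneg (dist (γ s).1 (γ t).1), sq_nonneg (dist (γ s).2 (γ t).2)]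

variable {a b : ℝ}

lemma wSum_le_wLength {n : ℕ} {t : Fin (n + 1) → ℝ} (ht : Monotone t) (ha : t 0 = a)
    (hb : t (Fin.last n) = b) : wSum f γ t ≤ wLength f γ a b :=
  le_iSup_of_le n <| le_iSup_of_le t <| le_iSup_of_le ht <| le_iSup_of_le ha <|
    le_iSup_of_le hb le_rfl

lemma sum_wTerm_le_wLength {u : ℕ → ℝ} (hu : Monotone u) (hus : ∀ i, u i ∈ Icc a b) (n : ℕ) :
    ∑ i ∈ range n, wTerm f γ (u i) (u (i + 1)) ≤ wLength f γ a b := by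
  set v := framedSeq a b u n
  have hv : Monotone v :=
    monotone_framedSeq hu (hus 0).1 (fun k => (hus k).2) n
  have hvu : ∀ i < n, wTerm f γ (v (i + 1)) (v (i + 2)) = wTerm f γ (u i) (u (i + 1)) := by
    intro i hi
    simp only [v, framedSeq, if_pos hi.le, if_pos (Nat.succ_le_of_lt hi)]
  calc ∑ i ∈ range n, wTerm f γ (u i) (u (i + 1))
      = ∑ i ∈ range n, wTerm f γ (v (i + 1)) (v (i + 2)) :=
        (Finset.sum_congr rfl fun i hi => hvu i (Finset.mem_range.1 hi)).symm
    _ ≤ ∑ i ∈ range (n + 2), wTerm f γ (v i) (v (i + 1)) := by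
        rw [Finset.sum_range_succ', Finset.sum_range_succ]
        exact le_add_right (le_add_right le_rfl)
    _ = wSum f γ (fun i : Fin (n + 3) => v i) := by
        rw [wSum_eq_sum_wTerm]
        exact (Fin.sum_univ_eq_sum_range (fun i => wTerm f γ (v i) (v (i + 1))) _).symm
    _ ≤ wLength f γ a b :=
        wSum_le_wLength f γ (hv.comp Fin.val_strictMono.monotone) rfl
          (by simp [v, framedSeq])

lemma wTerm_le_wLength {s t : ℝ} (has : a ≤ s) (hst : s ≤ t) (htb : t ≤ b) :
    wTerm f γ s t ≤ wLength f γ a b := by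
  have hu : Monotone fun k : ℕ => if k = 0 then s else t := by
    refine monotone_nat_of_le_succ fun k => ?_
    simp only [Nat.add_one_ne_zero, if_false]
    split_ifs
    exacts [hst, le_rfl]
  simpa using sum_wTerm_le_wLength f γ hu
    (fun k => by split_ifs <;> first | exact ⟨has, hst.trans htb⟩ | exact ⟨has.trans hst, htb⟩) 1

theorem ofReal_mul_eVariationOn_snd_le_wLength {m : ℝ} (hm : ∀ t ∈ Icc a b, m ≤ f (γ t).1) :
    ENNReal.ofReal m * eVariationOn (fun t => (γ t).2) (Icc a b) ≤ wLength f γ a b := by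
  rw [eVariationOn, ENNReal.mul_iSup]
  refine iSup_le fun ⟨n, u, hu, hus⟩ => ?_
  rw [Finset.mul_sum]
  refine le_trans (Finset.sum_le_sum fun i _ => ?_) (sum_wTerm_le_wLength f γ hu hus n)
  rw [edist_comm]
  exact ofReal_mul_edist_snd_le_wTerm f γ (hm _ (hus _))

end WarpedPath

theorem wDist_pos {B F : Type*} [PseudoMetricSpace B] [MetricSpace F] {f : B → ℝ} {p : B}
    (hf : ContinuousAt f p) (hp : 0 < f p) {x y : F} (hxy : x ≠ y) :
    0 < wDist f (p, x) (p, y) := by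
  obtain ⟨δ, hδ, hδf⟩ : ∃ δ > 0, ∀ q, dist q p < δ → f p / 2 < f q := by
    obtain ⟨δ, hδ, h⟩ := Metric.continuousAt_iff.1 hf (f p / 2) (half_pos hp)
    exact ⟨δ, hδ, fun q hq => by linarith [(abs_lt.1 (h hq)).1]⟩
  have hpos : 0 < min (ENNReal.ofReal δ) (ENNReal.ofReal (f p / 2) * edist x y) :=
    lt_min (ENNReal.ofReal_pos.2 hδ)
      (ENNReal.mul_pos (ENNReal.ofReal_pos.2 (half_pos hp)).ne' (edist_pos.2 hxy).ne')
  refine hpos.trans_le (le_iInf₂ fun γ _ => le_iInf₂ fun h0 h1 => ?_)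
  by_cases hstay : ∀ s ∈ Icc (0 : ℝ) 1, dist (γ s).1 p < δ
  · refine (min_le_right _ _).trans ?_
    calc ENNReal.ofReal (f p / 2) * edist x y
        = ENNReal.ofReal (f p / 2) * edist (γ 0).2 (γ 1).2 := by rw [h0, h1]
      _ ≤ ENNReal.ofReal (f p / 2) * eVariationOn (fun t => (γ t).2) (Icc 0 1) := by
          gcongr
          exact eVariationOn.edist_le _ (left_mem_Icc.2 zero_le_one) (right_mem_Icc.2 zero_le_one)
      _ ≤ wLength f γ 0 1 :=
          ofReal_mul_eVariationOn_snd_le_wLength f γ fun s hs => (hδf _ (hstay s hs)).le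
  · push Not at hstay
    obtain ⟨s, hs, hδs⟩ := hstay
    refine (min_le_left _ _).trans ?_
    calc ENNReal.ofReal δ ≤ edist (γ 0).1 (γ s).1 := by
          rw [h0, edist_dist, dist_comm]
          exact ENNReal.ofReal_le_ofReal hδs
      _ ≤ wTerm f γ 0 s := edist_fst_le_wTerm f γ 0 s
      _ ≤ wLength f γ 0 1 := wTerm_le_wLength f γ le_rfl hs.1 hs.2

theorem warped_length_dominates_fiber_general
    {B F : Type*} [MetricSpace B] [MetricSpace F]
    (f : B → ℝ) (hf : Continuous f) :
    (∀ (a b : ℝ) (γ : ℝ → B × F) (m : ℝ), a ≤ b → Admissible γ a b →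
      IsGLB ((fun t => f (γ t).1) '' Set.Icc a b) m →
      ENNReal.ofReal m * eVariationOn (fun t => (γ t).2) (Set.Icc a b) ≤
        wLength f γ a b) ∧
    ∀ (p : B) (x y : F), 0 < f p → x ≠ y → 0 < wDist f (p, x) (p, y) :=
  ⟨fun _ _ γ _ _ _ hm => ofReal_mul_eVariationOn_snd_le_wLength f γ fun t ht => hm.1 ⟨t, ht, rfl⟩,
    fun _ _ _ hp hxy => wDist_pos hf.continuousAt hp hxy⟩

/-- For an admissible path `γ = (α,β)` with `m := inf_{t ∈ [a,b]} f(α(t))`,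
the warped length satisfies `L(γ) ≥ m · L^F(β)`.  In particular, if `f(p) > 0`
and `x ≠ y`, the warped product distance `d_{B×_f F}((p,x),(p,y))` is positive. -/
theorem warped_length_dominates_fiber
    {B F : Type*} [MetricSpace B] [MetricSpace F]
    (f : B → ℝ) (hf : Continuous f) (hfnn : ∀ x, 0 ≤ f x) :
    (∀ (a b : ℝ) (γ : ℝ → B × F) (m : ℝ), a ≤ b → Admissible γ a b →
      IsGLB ((fun t => f (γ t).1) '' Set.Icc a b) m →
      ENNReal.ofReal m * eVariationOn (fun t => (γ t).2) (Set.Icc a b) ≤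
        wLength f γ a b) ∧
    ∀ (p : B) (x y : F), 0 < f p → x ≠ y → 0 < wDist f (p, x) (p, y) :=
  warped_length_dominates_fiber_general f hf
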